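/- For every n ≥ 1 there exists a unique unital K-algebra homomorphism E_n : TLhat_{n+1}(q) → TL_n(q) with E_n(g_{σ_i}) = g_{σ_i} for 1 ≤ i ≤ n and E_n(g_{a_{n+1}}) = g_{σ_1}⋯g_{σ_{n−1}}g_{σ_n}g_{σ_{n−1}}^{−1}⋯g_{σ_1}^{−1}. Moreover: E_n is surjective; the composition of the canonical homomorphism TL_n(q) → TLhat_{n+1}(q) (g_{σ_i} ↦ g_{σ_i}) with E_n is the identity of TL_n(q); and for n ≥ 2 one has E_n ∘ F_n = ι_n ∘ E_{n−1}, where ι_n : TL_{n−1}(q) → TL_n(q) is the canonical homomorphism g_{σ_i} ↦ g_{σ_i}. -/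

import Mathlib

namespace AffineTL

open FreeAlgebra

/-- Cyclic successor on `Fin m`. -/
def csucc {m : ℕ} (i : Fin m) : Fin m := ⟨(i.val + 1) % m, Nat.mod_lt _ i.pos⟩

/-- The defining relations of the affine Temperley–Lieb algebra `TLhat_m(q)` with `m`
generators (indexed so that `g_{σ_i}` has index `i - 1` and `g_{a_m}` has index `m - 1`).
For `m = 1` the unique generator is set to `0`, so that `TLhat_1(q) ≅ K`. -/
inductive ATLRel {K : Type*} [CommRing K] (q : K) (m : ℕ) :
    FreeAlgebra K (Fin m) → FreeAlgebra K (Fin m) → Prop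
  | degen (h : m ≤ 1) (i : Fin m) : ATLRel q m (ι K i) 0
  | quad (h : 2 ≤ m) (i : Fin m) :
      ATLRel q m (ι K i * ι K i) ((q - 1) • ι K i + algebraMap K _ q)
  | comm (h : 3 ≤ m) (i j : Fin m) (h1 : i ≠ j) (h2 : j ≠ csucc i) (h3 : i ≠ csucc j) :
      ATLRel q m (ι K i * ι K j) (ι K j * ι K i)
  | braid (h : 3 ≤ m) (i : Fin m) :
      ATLRel q m (ι K i * ι K (csucc i) * ι K i) (ι K (csucc i) * ι K i * ι K (csucc i))
  | vrel (h : 3 ≤ m) (i : Fin m) :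
      ATLRel q m (ι K i * ι K (csucc i) * ι K i + ι K i * ι K (csucc i) + ι K (csucc i) * ι K i
        + ι K i + ι K (csucc i) + 1) 0

/-- The affine Temperley–Lieb algebra `TLhat_m(q)` of type `Ã`. -/
abbrev ATL (K : Type*) [CommRing K] (q : K) (m : ℕ) : Type _ := RingQuot (ATLRel q m)

/-- The generators of `TLhat_m(q)`. -/
noncomputable def g {K : Type*} [CommRing K] (q : K) (m : ℕ) (i : Fin m) : ATL K q m :=
  RingQuot.mkAlgHom K (ATLRel q m) (ι K i)

/-- The defining relations of the type `A` Temperley–Lieb algebra `TL_n(q)` with `n`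
generators (`g_{σ_i}` has index `i - 1`). -/
inductive TLARel {K : Type*} [CommRing K] (q : K) (n : ℕ) :
    FreeAlgebra K (Fin n) → FreeAlgebra K (Fin n) → Prop
  | quad (i : Fin n) :
      TLARel q n (ι K i * ι K i) ((q - 1) • ι K i + algebraMap K _ q)
  | comm (i j : Fin n) (h : i.val + 2 ≤ j.val ∨ j.val + 2 ≤ i.val) :
      TLARel q n (ι K i * ι K j) (ι K j * ι K i)
  | braid (i j : Fin n) (h : j.val = i.val + 1) :
      TLARel q n (ι K i * ι K j * ι K i) (ι K j * ι K i * ι K j)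
  | vrel (i j : Fin n) (h : j.val = i.val + 1) :
      TLARel q n (ι K i * ι K j * ι K i + ι K i * ι K j + ι K j * ι K i
        + ι K i + ι K j + 1) 0

/-- The type `A` Temperley–Lieb algebra `TL_n(q)`. -/
abbrev TLA (K : Type*) [CommRing K] (q : K) (n : ℕ) : Type _ := RingQuot (TLARel q n)

/-- The generators of `TL_n(q)`. -/
noncomputable def gA {K : Type*} [CommRing K] (q : K) (n : ℕ) (i : Fin n) : TLA K q n :=
  RingQuot.mkAlgHom K (TLARel q n) (ι K i)

/-- The formal inverse `q⁻¹·(x − (q−1))` of an element satisfying `x² = (q−1)x + q`. -/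
noncomputable def qinv {K : Type*} [CommRing K] (q : K) {A : Type*} [Ring A] [Algebra K A]
    (x : A) : A :=
  Ring.inverse q • (x - algebraMap K A (q - 1))

/-- A trace on a `K`-algebra: a `K`-linear form vanishing on commutators. -/
def IsTrace {K : Type*} [CommRing K] {A : Type*} [Ring A] [Algebra K A]
    (τ : A →ₗ[K] K) : Prop :=
  ∀ x y : A, τ (x * y) = τ (y * x)

/-- The element `G = g_{σ_n}⋯g_{σ_1}·g_{a_{n+1}}` of `TLhat_{n+1}(q)`. -/
noncomputable def bigG {K : Type*} [CommRing K] (q : K) (n : ℕ) : ATL K q (n + 1) :=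
  (List.ofFn fun j : Fin n => g q (n + 1) ⟨n - 1 - j.val, by omega⟩).prod *
    g q (n + 1) (Fin.last n)

/-- The inverse `G⁻¹ = g_{a_{n+1}}⁻¹·g_{σ_1}⁻¹⋯g_{σ_n}⁻¹` of `bigG`. -/
noncomputable def bigGinv {K : Type*} [CommRing K] (q : K) (n : ℕ) : ATL K q (n + 1) :=
  qinv q (g q (n + 1) (Fin.last n)) *
    (List.ofFn fun j : Fin n => qinv q (g q (n + 1) j.castSucc)).prod

end AffineTL

namespace AffineTL

/-- `F` is the canonical homomorphism `F_m : TLhat_m(q) → TLhat_{m+1}(q)`: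
`t_{σ_i} ↦ g_{σ_i}` for `1 ≤ i ≤ m−1` and `t_{a_m} ↦ g_{σ_m}·g_{a_{m+1}}·g_{σ_m}⁻¹`. -/
def isF {K : Type*} [CommRing K] (q : K) (m : ℕ) (hm : 2 ≤ m)
    (F : ATL K q m →ₐ[K] ATL K q (m + 1)) : Prop :=
  (∀ i : ℕ, ∀ hi : i < m - 1,
      F (g q m ⟨i, by omega⟩) = g q (m + 1) ⟨i, by omega⟩) ∧
  F (g q m ⟨m - 1, by omega⟩) =
    g q (m + 1) ⟨m - 1, by omega⟩ * g q (m + 1) ⟨m, by omega⟩ *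
      qinv q (g q (m + 1) ⟨m - 1, by omega⟩)

end AffineTL

namespace AffineTL

/-- `E` is the canonical surjection `E_n : TLhat_{n+1}(q) → TL_n(q)`:
`g_{σ_i} ↦ g_{σ_i}` for `1 ≤ i ≤ n` and
`g_{a_{n+1}} ↦ g_{σ_1}⋯g_{σ_{n−1}}·g_{σ_n}·g_{σ_{n−1}}⁻¹⋯g_{σ_1}⁻¹`. -/
def isE {K : Type*} [CommRing K] (q : K) (n : ℕ) (hn : 1 ≤ n)
    (E : ATL K q (n + 1) →ₐ[K] TLA K q n) : Prop :=
  (∀ i : Fin n, E (g q (n + 1) i.castSucc) = gA q n i) ∧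
  E (g q (n + 1) (Fin.last n)) =
    (List.ofFn fun j : Fin (n - 1) => gA q n ⟨j.val, by omega⟩).prod *
      gA q n ⟨n - 1, by omega⟩ *
      (List.ofFn fun j : Fin (n - 1) => qinv q (gA q n ⟨n - 2 - j.val, by omega⟩)).prod

end AffineTL


/-!
In `TL_n(q)` the generators are units, and the Coxeter element `c = g_{σ_1} ⋯ g_{σ_n}`
conjugates `g_{σ_i}` to `g_{σ_{i+1}}` for `i < n`, `g_{σ_n}` to
`b_n = c g_{σ_n} c⁻¹ = g_{σ_1} ⋯ g_{σ_{n-1}} g_{σ_n} g_{σ_{n-1}}⁻¹ ⋯ g_{σ_1}⁻¹`, and `b_n` back to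
`g_{σ_1}` (the braid identity `c² g_{σ_n} = g_{σ_1} c²`, by induction on `n`). So conjugation by
`c` permutes the prescribed images of the `n + 1` affine generators exactly as the cyclic symmetry
of the affine relations does, and every relation of `TLhat_{n+1}(q)` becomes a conjugate of a
relation of `TL_n(q)` at the first generator. Uniqueness, surjectivity and the retraction hold
because generators go to generators; the square commutes on `g_{a_{n+1}}` because
`g_{σ_{n+1}} b_{n+1} g_{σ_{n+1}}⁻¹ = b_n` in `TL_{n+1}(q)`, again by the braid relation.
-/

section BraidFamily

variable {G : Type*} [Group G]

structure IsBraidFamily (s : ℕ → G) (n : ℕ) : Prop where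
  commute : ∀ i j, i + 2 ≤ j → j < n → Commute (s i) (s j)
  braid : ∀ i, i + 1 < n → s i * s (i + 1) * s i = s (i + 1) * s i * s (i + 1)

def coxeterPrefix (s : ℕ → G) (k : ℕ) : G :=
  (List.ofFn fun j : Fin k => s j).prod

def band (s : ℕ → G) (k : ℕ) : G :=
  coxeterPrefix s k * s k * (coxeterPrefix s k)⁻¹

variable {s : ℕ → G} {n : ℕ}

theorem coxeterPrefix_succ (k : ℕ) : coxeterPrefix s (k + 1) = coxeterPrefix s k * s k := by
  simp only [coxeterPrefix, List.ofFn_succ', List.prod_concat, Fin.val_castSucc, Fin.val_last]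

theorem prod_ofFn_inv_eq_inv_coxeterPrefix (k : ℕ) :
    (List.ofFn fun j : Fin k => (s (k - 1 - j))⁻¹).prod = (coxeterPrefix s k)⁻¹ := by
  induction k with
  | zero => simp [coxeterPrefix]
  | succ k ih =>
    have hidx : ∀ j : Fin k, k - (j.val + 1) = k - 1 - j.val := fun j => by omega
    rw [List.ofFn_succ, List.prod_cons, coxeterPrefix_succ, mul_inv_rev, ← ih]
    simp only [Fin.val_zero, Fin.val_succ, Nat.add_sub_cancel, Nat.sub_zero, hidx]

theorem band_eq_conj_coxeterPrefix_succ (k : ℕ) :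
    band s k = coxeterPrefix s (k + 1) * s k * (coxeterPrefix s (k + 1))⁻¹ := by
  rw [band, coxeterPrefix_succ]
  group

theorem map_band {H : Type*} [Group H] (f : G →* H) (k : ℕ) :
    f (band s k) = band (f ∘ s) k := by
  simp [band, coxeterPrefix, map_list_prod, List.map_ofFn, Function.comp_def]

theorem band_congr {s' : ℕ → G} {k : ℕ} (h : ∀ i ≤ k, s i = s' i) :
    band s k = band s' k := by
  have hw : coxeterPrefix s k = coxeterPrefix s' k :=
    congrArg List.prod (List.ofFn_inj.2 (funext fun j => h j (by omega)))
  rw [band, band, hw, h k le_rfl]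

/-- The images under `E_n` of the generators of `TLhat_{n+1}(q)`, computed in a group. -/
def affineGen (s : ℕ → G) (n : ℕ) (j : Fin (n + 1)) : G :=
  if j.val < n then s j else band s (n - 1)

namespace IsBraidFamily

theorem commute_coxeterPrefix (hs : IsBraidFamily s n) {j k : ℕ} (hkj : k < j) (hj : j < n) :
    Commute (s j) (coxeterPrefix s k) := by
  induction k with
  | zero => exact Commute.one_right _
  | succ k ih =>
    rw [coxeterPrefix_succ]
    exact (ih (by omega)).mul_right (hs.commute k j (by omega) hj).symm

theorem semiconjBy_coxeterPrefix (hs : IsBraidFamily s n) {j k : ℕ} (hjk : j + 2 ≤ k)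
    (hk : k ≤ n) :
    SemiconjBy (coxeterPrefix s k) (s j) (s (j + 1)) := by
  induction k, hjk using Nat.le_induction with
  | base =>
    have hc := (hs.commute_coxeterPrefix (j := j + 1) (k := j) (by omega) (by omega)).eq
    rw [coxeterPrefix_succ, coxeterPrefix_succ, SemiconjBy]
    calc coxeterPrefix s j * s j * s (j + 1) * s j
        = coxeterPrefix s j * (s j * s (j + 1) * s j) := by group
      _ = coxeterPrefix s j * s (j + 1) * (s j * s (j + 1)) := by
        rw [hs.braid j (by omega)]; group
      _ = s (j + 1) * (coxeterPrefix s j * s j * s (j + 1)) := by rw [← hc]; group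
  | succ k hjk ih =>
    rw [coxeterPrefix_succ]
    exact (ih (by omega)).mul_left (hs.commute j k (by omega) (by omega)).symm

theorem semiconjBy_coxeterPrefix_sq (hs : IsBraidFamily s n) {k : ℕ} (hk : k < n) :
    SemiconjBy (coxeterPrefix s (k + 1) * coxeterPrefix s (k + 1)) (s k) (s 0) := by
  induction k with
  | zero =>
    rw [show coxeterPrefix s 1 = s 0 by simp [coxeterPrefix]]
    exact (Commute.refl (s 0)).mul_left (Commute.refl _)
  | succ k ih =>
    set v := coxeterPrefix s k
    set a := s k
    set b := s (k + 1)
    have hvb : b * v = v * b := (hs.commute_coxeterPrefix (by omega) hk).eq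
    have hbab : b * a * b = a * b * a := (hs.braid k hk).symm
    have hih : v * a * (v * a) * a = s 0 * (v * a * (v * a)) := by
      simpa [SemiconjBy, coxeterPrefix_succ] using ih (by omega)
    rw [SemiconjBy, coxeterPrefix_succ, coxeterPrefix_succ]
    calc v * a * b * (v * a * b) * b
        = v * a * (b * v) * (a * b * b) := by group
      _ = v * a * v * (b * a * b) * b := by rw [hvb]; group
      _ = v * a * v * (a * b * a) * b := congrArg (fun z => v * a * v * z * b) hbab
      _ = v * a * (v * a) * (b * a * b) := by group
      _ = v * a * (v * a) * (a * b * a) := congrArg (fun z => v * a * (v * a) * z) hbab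
      _ = s 0 * (v * a * (v * a)) * (b * a) := by rw [← hih]; group
      _ = s 0 * (v * a * v) * (a * b * a) := by group
      _ = s 0 * (v * a * v) * (b * a * b) := congrArg (fun z => s 0 * (v * a * v) * z) hbab.symm
      _ = s 0 * (v * a * (b * v) * a * b) := by rw [hvb]; group
      _ = s 0 * (v * a * b * (v * a * b)) := by group

theorem semiconjBy_band_succ (hs : IsBraidFamily s n) {k : ℕ} (hk : k + 1 < n) :
    SemiconjBy (s (k + 1)) (band s (k + 1)) (band s k) := by
  have hc := hs.commute_coxeterPrefix (j := k + 1) (k := k) (by omega) hk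
  have hbraid : SemiconjBy (s (k + 1)) (s k * s (k + 1) * (s k)⁻¹) (s k) := by
    rw [SemiconjBy, ← mul_assoc, ← mul_assoc, ← (hs.braid k hk)]
    group
  rw [band, band, coxeterPrefix_succ,
    show coxeterPrefix s k * s k * s (k + 1) * (coxeterPrefix s k * s k)⁻¹
      = coxeterPrefix s k * (s k * s (k + 1) * (s k)⁻¹) * (coxeterPrefix s k)⁻¹ by group]
  exact (SemiconjBy.mul_right hc hbraid).mul_right hc.inv_right

theorem semiconjBy_affineGen (hs : IsBraidFamily s n) (hn : 1 ≤ n) (j : Fin (n + 1)) :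
    SemiconjBy (coxeterPrefix s n) (affineGen s n j) (affineGen s n (j + 1)) := by
  obtain ⟨m, rfl⟩ : ∃ m, n = m + 1 := ⟨n - 1, by omega⟩
  have hband := band_eq_conj_coxeterPrefix_succ (s := s) m
  by_cases hlast : j = Fin.last (m + 1)
  · have hsq := (hs.semiconjBy_coxeterPrefix_sq (k := m) (by omega)).eq
    subst hlast
    simp only [affineGen, Fin.last_add_one, Fin.val_last, Fin.val_zero, lt_irrefl,
      Nat.zero_lt_succ, if_true, if_false, Nat.add_sub_cancel, hband, SemiconjBy]
    calc coxeterPrefix s (m + 1) * (coxeterPrefix s (m + 1) * s m * (coxeterPrefix s (m + 1))⁻¹)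
        = coxeterPrefix s (m + 1) * coxeterPrefix s (m + 1) * s m
          * (coxeterPrefix s (m + 1))⁻¹ := by group
      _ = s 0 * coxeterPrefix s (m + 1) := by rw [hsq]; group
  · have hj1 : (j + 1).val = j.val + 1 := by simp [Fin.val_add_one, hlast]
    have hj : j.val < m + 1 := by
      have := Fin.val_lt_last hlast
      omega
    rcases Nat.lt_or_ge j.val m with hjm | hjm
    · simpa [affineGen, hj1, hj, hjm] using hs.semiconjBy_coxeterPrefix (j := j) (by omega) le_rfl
    · have hjm : j.val = m := by omega
      simp only [affineGen, hj1, hjm, lt_irrefl, Nat.lt_succ_self, if_true, if_false,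
        Nat.add_sub_cancel, hband, SemiconjBy]
      group

end IsBraidFamily

end BraidFamily

namespace AffineTL

open FreeAlgebra

variable {K : Type*} [CommRing K] {q : K}

theorem csucc_eq_add_one {m : ℕ} (i : Fin (m + 1)) : csucc i = i + 1 :=
  Fin.ext (by simp [csucc, Fin.val_add])

theorem two_le_val_sub_of_not_adjacent {m : ℕ} {i j : Fin (m + 1)} (hij : i ≠ j)
    (hj : j ≠ csucc i) (hi : i ≠ csucc j) : 2 ≤ (j - i).val ∧ (j - i).val < m := by
  have hne0 : (j - i).val ≠ 0 := fun h0 => hij (sub_eq_zero.1 (Fin.ext h0)).symm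
  have hne1 : (j - i).val ≠ 1 := fun h1 => hj <| by
    rw [csucc_eq_add_one, ← sub_eq_iff_eq_add', Fin.ext_iff, h1, Fin.val_one',
      Nat.mod_eq_of_lt (by omega)]
  have hnel : (j - i).val ≠ m := fun hl => hi <| by
    rw [csucc_eq_add_one, eq_comm, ← sub_eq_zero, show j + 1 - i = j - i + 1 by abel,
      show j - i = Fin.last m from Fin.ext hl, Fin.last_add_one]
  have := (j - i).isLt
  omega

theorem ATL.algHom_ext {m : ℕ} {A : Type*} [Semiring A] [Algebra K A]
    {f f' : ATL K q m →ₐ[K] A} (h : ∀ i, f (g q m i) = f' (g q m i)) : f = f' :=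
  RingQuot.ringQuot_ext' K _ _ (FreeAlgebra.hom_ext (funext h))

theorem TLA.algHom_ext {n : ℕ} {A : Type*} [Semiring A] [Algebra K A]
    {f f' : TLA K q n →ₐ[K] A} (h : ∀ i, f (gA q n i) = f' (gA q n i)) : f = f' :=
  RingQuot.ringQuot_ext' K _ _ (FreeAlgebra.hom_ext (funext h))

section

variable {A : Type*} [Ring A] [Algebra K A]

open Fin.NatCast in
theorem ATL.exists_lift_of_rotation {m : ℕ} (hm : 1 ≤ m) (t : Fin (m + 1) → A)
    (ρ : A →ₐ[K] A) (hρ : ∀ j, ρ (t j) = t (j + 1))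
    (hquad : t 0 * t 0 = (q - 1) • t 0 + algebraMap K A q)
    (hcomm : ∀ j : Fin (m + 1), 2 ≤ j.val → j.val < m → Commute (t 0) (t j))
    (hbraid : 2 ≤ m → t 0 * t 1 * t 0 = t 1 * t 0 * t 1)
    (hvrel : 2 ≤ m → t 0 * t 1 * t 0 + t 0 * t 1 + t 1 * t 0 + t 0 + t 1 + 1 = 0) :
    ∃ E : ATL K q (m + 1) →ₐ[K] A, ∀ i, E (g q (m + 1) i) = t i := by
  have hpow : ∀ (k : ℕ) j, (ρ ^ k) (t j) = t (j + (k : Fin (m + 1))) := by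
    intro k
    induction k with
    | zero => simp
    | succ k ih => intro j; rw [pow_succ', AlgHom.mul_apply, ih, hρ, Nat.cast_succ, add_assoc]
  have hrot : ∀ i j : Fin (m + 1), (ρ ^ i.val) (t j) = t (j + i) := fun i j => by
    rw [hpow, Fin.cast_val_eq_self]
  have hfirst : ∀ i : Fin (m + 1), (ρ ^ i.val) (t 0) = t i := fun i => by rw [hrot, zero_add]
  have hsecond : ∀ i : Fin (m + 1), (ρ ^ i.val) (t 1) = t (csucc i) := fun i => by
    rw [hrot, csucc_eq_add_one, add_comm]
  refine ⟨RingQuot.liftAlgHom K ⟨FreeAlgebra.lift K t, ?_⟩, fun i => ?_⟩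
  swap
  · rw [g, RingQuot.liftAlgHom_mkAlgHom_apply, lift_ι_apply]
  -- each relation at index `i` is the image under `ρ ^ i` of the same relation at index `0`
  intro x y hxy
  cases hxy with
  | degen h i => omega
  | quad _ i =>
    simp only [map_mul, map_add, map_smul, AlgHom.commutes, lift_ι_apply]
    rw [← hfirst i, ← map_mul, hquad, map_add, map_smul, AlgHom.commutes]
  | comm h i j hij hj hi =>
    simp only [map_mul, lift_ι_apply]
    have hj' : (ρ ^ i.val) (t (j - i)) = t j := by rw [hrot, sub_add_cancel]
    obtain ⟨h2, hlt⟩ := two_le_val_sub_of_not_adjacent hij hj hi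
    rw [← hfirst i, ← hj', ← map_mul, ← map_mul, (hcomm (j - i) h2 hlt).eq]
  | braid h i =>
    simp only [map_mul, lift_ι_apply]
    rw [← hfirst i, ← hsecond i]
    simp only [← map_mul]
    rw [hbraid (by omega)]
  | vrel h i =>
    simp only [map_add, map_mul, map_one, map_zero, lift_ι_apply]
    rw [← hfirst i, ← hsecond i, ← map_one (ρ ^ i.val), ← map_zero (ρ ^ i.val)]
    simp only [← map_mul, ← map_add]
    rw [hvrel (by omega)]

theorem mul_qinv_of_mul_self (hq : IsUnit q) {x : A}
    (hx : x * x = (q - 1) • x + algebraMap K A q) : x * qinv q x = 1 := by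
  rw [qinv, mul_smul_comm, mul_sub, hx, ← Algebra.commutes, ← Algebra.smul_def,
    add_sub_cancel_left, Algebra.smul_def, ← map_mul, Ring.inverse_mul_cancel _ hq, map_one]

theorem qinv_mul_of_mul_self (hq : IsUnit q) {x : A}
    (hx : x * x = (q - 1) • x + algebraMap K A q) : qinv q x * x = 1 := by
  rw [qinv, smul_mul_assoc, sub_mul, hx, ← Algebra.smul_def, add_sub_cancel_left,
    Algebra.smul_def, ← map_mul, Ring.inverse_mul_cancel _ hq, map_one]

theorem map_qinv {B : Type*} [Ring B] [Algebra K B] (φ : A →ₐ[K] B) (x : A) :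
    φ (qinv q x) = qinv q (φ x) := by
  simp [qinv, map_sub]

end

section TypeA

variable {n : ℕ}

theorem gA_mul_self (i : Fin n) :
    gA q n i * gA q n i = (q - 1) • gA q n i + algebraMap K _ q := by
  simpa [gA] using RingQuot.mkAlgHom_rel K (TLARel.quad (q := q) i)

theorem gA_commute (i j : Fin n) (h : i.val + 2 ≤ j.val) : Commute (gA q n i) (gA q n j) := by
  simpa [Commute, SemiconjBy, gA] using
    RingQuot.mkAlgHom_rel K (TLARel.comm (q := q) i j (Or.inl h))

theorem gA_braid (i j : Fin n) (h : j.val = i.val + 1) :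
    gA q n i * gA q n j * gA q n i = gA q n j * gA q n i * gA q n j := by
  simpa [gA] using RingQuot.mkAlgHom_rel K (TLARel.braid (q := q) i j h)

theorem gA_vrel (i j : Fin n) (h : j.val = i.val + 1) :
    gA q n i * gA q n j * gA q n i + gA q n i * gA q n j + gA q n j * gA q n i
      + gA q n i + gA q n j + 1 = 0 := by
  simpa [gA] using RingQuot.mkAlgHom_rel K (TLARel.vrel (q := q) i j h)

noncomputable def genUnit (hq : IsUnit q) (n i : ℕ) : (TLA K q n)ˣ :=
  if h : i < n then
    ⟨gA q n ⟨i, h⟩, qinv q (gA q n ⟨i, h⟩), mul_qinv_of_mul_self hq (gA_mul_self _),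
      qinv_mul_of_mul_self hq (gA_mul_self _)⟩
  else 1

variable (hq : IsUnit q)

theorem val_genUnit {i : ℕ} (h : i < n) : (genUnit hq n i : TLA K q n) = gA q n ⟨i, h⟩ := by
  simp [genUnit, h]

theorem val_inv_genUnit {i : ℕ} (h : i < n) :
    ((genUnit hq n i)⁻¹ : (TLA K q n)ˣ) = qinv q (gA q n ⟨i, h⟩) := by
  simp [genUnit, h]

theorem isBraidFamily_genUnit : IsBraidFamily (genUnit hq n) n where
  commute i j hij hj := Units.ext <| by
    simpa [val_genUnit hq hj, val_genUnit hq (show i < n by omega)] using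
      (gA_commute (q := q) ⟨i, by omega⟩ ⟨j, hj⟩ hij).eq
  braid i hi := Units.ext <| by
    simpa [val_genUnit hq hi, val_genUnit hq (show i < n by omega)] using
      gA_braid (q := q) ⟨i, by omega⟩ ⟨i + 1, hi⟩ rfl

theorem val_band_genUnit {k : ℕ} (hk : k < n) :
    ((band (genUnit hq n) k : (TLA K q n)ˣ) : TLA K q n) =
      (List.ofFn fun j : Fin k => gA q n ⟨j, by omega⟩).prod * gA q n ⟨k, hk⟩ *
        (List.ofFn fun j : Fin k => qinv q (gA q n ⟨k - 1 - j, by omega⟩)).prod := by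
  have hval (l : List (TLA K q n)ˣ) : (l.prod : TLA K q n) = (l.map (↑)).prod :=
    map_list_prod (Units.coeHom _) l
  rw [band, ← prod_ofFn_inv_eq_inv_coxeterPrefix, coxeterPrefix, Units.val_mul, Units.val_mul,
    hval, hval, List.map_ofFn, List.map_ofFn, val_genUnit hq hk]
  congr 2
  · exact congrArg List.prod (List.ofFn_inj.2 (funext fun j => val_genUnit hq _))
  · exact List.ofFn_inj.2 (funext fun j => val_inv_genUnit hq _)

theorem map_val_band_genUnit {ι : TLA K q n →ₐ[K] TLA K q (n + 1)}
    (hι : ∀ i, ι (gA q n i) = gA q (n + 1) i.castSucc) {k : ℕ} (hk : k < n) :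
    ι ((band (genUnit hq n) k : (TLA K q n)ˣ) : TLA K q n) =
      ((band (genUnit hq (n + 1)) k : (TLA K q (n + 1))ˣ) : TLA K q (n + 1)) := by
  change ((Units.map (ι : TLA K q n →* TLA K q (n + 1)) (band (genUnit hq n) k) :
    (TLA K q (n + 1))ˣ) : TLA K q (n + 1)) = _
  rw [map_band]
  refine congrArg Units.val (band_congr fun i hi => Units.ext ?_)
  rw [Function.comp_apply, Units.coe_map, val_genUnit hq (by omega), val_genUnit hq (by omega)]
  exact hι ⟨i, by omega⟩

theorem TLA.adjoin_range_gA : Algebra.adjoin K (Set.range (gA q n)) = ⊤ := by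
  have hrange : Set.range (gA q n) = RingQuot.mkAlgHom K (TLARel q n) '' Set.range (ι K) := by
    rw [← Set.range_comp]
    rfl
  rw [hrange, ← AlgHom.map_adjoin, FreeAlgebra.adjoin_range_ι, Algebra.map_top,
    AlgHom.range_eq_top]
  exact RingQuot.mkAlgHom_surjective K _

end TypeA

section CanonicalSurjection

variable {n : ℕ} {hn : 1 ≤ n} {E : ATL K q (n + 1) →ₐ[K] TLA K q n}

theorem isE.apply_last (hE : isE q n hn E) (hq : IsUnit q) :
    E (g q (n + 1) (Fin.last n)) = band (genUnit hq n) (n - 1) :=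
  hE.2.trans (val_band_genUnit hq (by omega)).symm

theorem exists_isE (hq : IsUnit q) (hn : 1 ≤ n) :
    ∃ E : ATL K q (n + 1) →ₐ[K] TLA K q n, isE q n hn E := by
  set s := genUnit hq n
  have hs := isBraidFamily_genUnit hq (n := n)
  have hlt (j : Fin (n + 1)) (h : j.val < n) :
      ((affineGen s n j : (TLA K q n)ˣ) : TLA K q n) = gA q n ⟨j, h⟩ := by
    simp [affineGen, h, s, val_genUnit hq h]
  have h0 : ((0 : Fin (n + 1)) : ℕ) < n := hn
  have h1 : ((1 : Fin (n + 1)) : ℕ) = 1 := by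
    rw [Fin.val_one', Nat.mod_eq_of_lt (by omega)]
  obtain ⟨E, hE⟩ := ATL.exists_lift_of_rotation (q := q) hn
    (fun j => ((affineGen s n j : (TLA K q n)ˣ) : TLA K q n))
    (MulSemiringAction.toAlgHom K (TLA K q n) (ConjAct.toConjAct (coxeterPrefix s n)))
    (fun j => by
      rw [MulSemiringAction.toAlgHom_apply, ConjAct.units_smul_def, ConjAct.ofConjAct_toConjAct,
        ← Units.val_mul, ← Units.val_mul, (hs.semiconjBy_affineGen hn j).eq,
        mul_inv_cancel_right])
    (by rw [hlt 0 h0]; exact gA_mul_self _)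
    (fun j h2 hj => by rw [hlt 0 h0, hlt j hj]; exact gA_commute _ _ h2)
    (fun h2 => by rw [hlt 0 h0, hlt 1 (by omega)]; exact gA_braid _ _ h1)
    (fun h2 => by rw [hlt 0 h0, hlt 1 (by omega)]; exact gA_vrel _ _ h1)
  refine ⟨E, fun i => (hE _).trans (hlt _ i.isLt), ?_⟩
  rw [hE, affineGen, if_neg (by simp)]
  exact val_band_genUnit hq (by omega)

theorem isE_unique {E' : ATL K q (n + 1) →ₐ[K] TLA K q n} (hE : isE q n hn E)
    (hE' : isE q n hn E') : E = E' :=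
  ATL.algHom_ext fun i => Fin.lastCases (by rw [hE.2, hE'.2]) (fun j => by rw [hE.1, hE'.1]) i

theorem isE.surjective (hE : isE q n hn E) : Function.Surjective E := by
  refine (AlgHom.range_eq_top _).1 (eq_top_iff.2 ?_)
  rw [← TLA.adjoin_range_gA]
  exact Algebra.adjoin_le (by rintro _ ⟨i, rfl⟩; exact ⟨_, hE.1 i⟩)

theorem isE.comp_eq_id (hE : isE q n hn E) {incl : TLA K q n →ₐ[K] ATL K q (n + 1)}
    (hincl : ∀ i, incl (gA q n i) = g q (n + 1) i.castSucc) :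
    E.comp incl = AlgHom.id K (TLA K q n) :=
  TLA.algHom_ext fun i => by rw [AlgHom.comp_apply, hincl, hE.1, AlgHom.id_apply]

theorem isE.comp_isF (hq : IsUnit q) (hE : isE q n hn E)
    {E' : ATL K q (n + 2) →ₐ[K] TLA K q (n + 1)} (hE' : isE q (n + 1) (Nat.le_add_left 1 n) E')
    {F : ATL K q (n + 1) →ₐ[K] ATL K q (n + 2)} (hF : isF q (n + 1) (Nat.succ_le_succ hn) F)
    {ι : TLA K q n →ₐ[K] TLA K q (n + 1)} (hι : ∀ i, ι (gA q n i) = gA q (n + 1) i.castSucc) :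
    E'.comp F = ι.comp E := by
  refine ATL.algHom_ext fun i => ?_
  simp only [AlgHom.comp_apply]
  induction i using Fin.lastCases with
  | cast j =>
    have hFj : F (g q (n + 1) j.castSucc) = g q (n + 2) j.castSucc.castSucc := hF.1 j (by omega)
    rw [hFj, hE'.1, hE.1, hι]
  | last =>
    obtain ⟨m, rfl⟩ : ∃ m, n = m + 1 := ⟨n - 1, by omega⟩
    have hFlast : F (g q (m + 1 + 1) (Fin.last (m + 1)))
        = g q (m + 1 + 2) (Fin.last (m + 1)).castSucc * g q (m + 1 + 2) (Fin.last (m + 1 + 1))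
          * qinv q (g q (m + 1 + 2) (Fin.last (m + 1)).castSucc) :=
      hF.2
    have hval : gA q (m + 1 + 1) (Fin.last (m + 1)) = genUnit hq (m + 1 + 1) (m + 1) :=
      (val_genUnit hq _).symm
    have hval_inv : qinv q (gA q (m + 1 + 1) (Fin.last (m + 1)))
        = ↑(genUnit hq (m + 1 + 1) (m + 1))⁻¹ :=
      (val_inv_genUnit hq _).symm
    rw [hFlast, map_mul, map_mul, map_qinv, hE'.1, hE'.apply_last hq, hE.apply_last hq, hval_inv,
      hval, map_val_band_genUnit hq hι (by omega), ← Units.val_mul, ← Units.val_mul,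
      Nat.add_sub_cancel, Nat.add_sub_cancel,
      ((isBraidFamily_genUnit hq).semiconjBy_band_succ (by omega)).eq, mul_inv_cancel_right]

end CanonicalSurjection

end AffineTL

open AffineTL in
/-- for every `n ≥ 1` there is a unique homomorphism
`E_n : TLhat_{n+1}(q) → TL_n(q)` with the prescribed values on generators; it is
surjective, it retracts the canonical inclusion `TL_n(q) → TLhat_{n+1}(q)`, and the square
`E_{n+1} ∘ F_{n+1} = ι_{n+1} ∘ E_n` commutes (this is the square `E_n ∘ F_n = ι_n ∘ E_{n−1}`
of the paper, for all indices `≥ 2`). -/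
theorem statement1 {K : Type*} [CommRing K]
    (q : K) (hq : IsUnit q)
    (n : ℕ) (hn : 1 ≤ n) :
    (∃! E : ATL K q (n + 1) →ₐ[K] TLA K q n, isE q n hn E) ∧
    (∀ E : ATL K q (n + 1) →ₐ[K] TLA K q n, isE q n hn E →
      -- `E_n` is surjective
      Function.Surjective E ∧
      -- `E_n` retracts the canonical inclusion `TL_n(q) → TLhat_{n+1}(q)`
      (∀ incl : TLA K q n →ₐ[K] ATL K q (n + 1),
        (∀ i : Fin n, incl (gA q n i) = g q (n + 1) i.castSucc) →
        E.comp incl = AlgHom.id K (TLA K q n)) ∧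
      -- the commuting square `E_{n+1} ∘ F_{n+1} = ι_{n+1} ∘ E_n`
      (∀ E' : ATL K q (n + 2) →ₐ[K] TLA K q (n + 1),
        isE q (n + 1) (by omega) E' →
        ∀ F : ATL K q (n + 1) →ₐ[K] ATL K q (n + 2),
          isF q (n + 1) (by omega) F →
          ∀ ι : TLA K q n →ₐ[K] TLA K q (n + 1),
            (∀ i : Fin n, ι (gA q n i) = gA q (n + 1) i.castSucc) →
            E'.comp F = ι.comp E)) := by
  obtain ⟨E₀, hE₀⟩ := exists_isE hq hn
  exact ⟨⟨E₀, hE₀, fun E hE => isE_unique hE hE₀⟩, fun E hE =>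
    ⟨hE.surjective, fun _ hincl => hE.comp_eq_id hincl,
      fun _ hE' _ hF _ hι => hE.comp_isF hq hE' hF hι⟩⟩
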